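/- Under the Dawid–Skene model with a decomposable aggregation rule: for every item j, if τ_j^max ≤ 0, then P(ŷ_j ≠ y_j) ≥ 1 − min{ exp(−(τ_j^max)²/2), exp(−(τ_j^max)²/(2·(σ² − c·τ_j^max/3))) }. -/

import Mathlib

/-!
Fix the item and, for every label `k`, a competitor `l k ≠ k`. A correct prediction with true
label `k` forces the normalized margin `(∑ᵢ (fᵢ(k, Zᵢ) − fᵢ(l k, Zᵢ)) + a_k − a_{l k}) / N̄` to be
nonnegative, whereas its conditional mean is `Δ(k, l k) / N̄ ≤ τ^max < 0`. Given the true label the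
summands are independent, so a Chernoff bound applies: bounding the moment generating function of
each summand by Hoeffding's lemma gives `exp (−τ²/2)`, and bounding it through
`exp x ≤ 1 + x + x² / (2 (1 − u/3))` for `x ≤ u < 3` gives the Bernstein form
`exp (−τ² / (2 (σ² − c τ / 3)))`. The error probability is the complementary one.
-/

open MeasureTheory ProbabilityTheory Real

noncomputable section

namespace CrowdDS

/-- Conditional law of the label `Z i j` (valued in `Fin (L+1)`, `0` = missing) given the
true label `y j = k`, under the general Dawid–Skene model with assignment probabilities `q`
and confusion matrices `p` (where `p i k h` is the probability of reporting label `h.succ`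
given true label `k`). -/
def condLaw {M N L : ℕ} (q : Fin M → Fin N → ℝ) (p : Fin M → Fin L → Fin L → ℝ)
    (i : Fin M) (j : Fin N) (k : Fin L) (h : Fin (L + 1)) : ℝ :=
  if hz : h = 0 then 1 - q i j else q i j * p i k (h.pred hz)

/-- The normalizing quantity `N̄`. -/
def nbar {M L : ℕ} (f : Fin M → Fin L → Fin (L + 1) → ℝ) : ℝ :=
  Real.sqrt (∑ i, (sSup {x : ℝ | ∃ k l h : Fin L, k ≠ l ∧
    x = |f i k h.succ - f i l h.succ|}) ^ 2)

/-- Expected gap `Δ_j(k,l)` of the aggregated scores. -/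
def gap {M N L : ℕ} (f : Fin M → Fin L → Fin (L + 1) → ℝ) (a : Fin L → ℝ)
    (q : Fin M → Fin N → ℝ) (p : Fin M → Fin L → Fin L → ℝ)
    (j : Fin N) (k l : Fin L) : ℝ :=
  (∑ i, ∑ h : Fin L, q i j * (f i k h.succ - f i l h.succ) * p i k h) + (a k - a l)

/-- `τ_j^min`. -/
def tauMin {M N L : ℕ} (f : Fin M → Fin L → Fin (L + 1) → ℝ) (a : Fin L → ℝ)
    (q : Fin M → Fin N → ℝ) (p : Fin M → Fin L → Fin L → ℝ) (j : Fin N) : ℝ :=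
  sInf {x : ℝ | ∃ k l : Fin L, k ≠ l ∧ x = gap f a q p j k l / nbar f}

/-- `τ_j^max`. -/
def tauMax {M N L : ℕ} (f : Fin M → Fin L → Fin (L + 1) → ℝ) (a : Fin L → ℝ)
    (q : Fin M → Fin N → ℝ) (p : Fin M → Fin L → Fin L → ℝ) (j : Fin N) : ℝ :=
  sSup {x : ℝ | ∃ k l : Fin L, k ≠ l ∧ x = gap f a q p j k l / nbar f}

/-- `t̄ = min_j τ_j^min`. -/
def tbar {M N L : ℕ} (f : Fin M → Fin L → Fin (L + 1) → ℝ) (a : Fin L → ℝ)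
    (q : Fin M → Fin N → ℝ) (p : Fin M → Fin L → Fin L → ℝ) : ℝ :=
  sInf {x : ℝ | ∃ j : Fin N, x = tauMin f a q p j}

/-- `t̃ = max_j τ_j^max`. -/
def ttil {M N L : ℕ} (f : Fin M → Fin L → Fin (L + 1) → ℝ) (a : Fin L → ℝ)
    (q : Fin M → Fin N → ℝ) (p : Fin M → Fin L → Fin L → ℝ) : ℝ :=
  sSup {x : ℝ | ∃ j : Fin N, x = tauMax f a q p j}

/-- The constant `c`. -/
def cConst {M L : ℕ} (f : Fin M → Fin L → Fin (L + 1) → ℝ) : ℝ :=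
  (1 / nbar f) * sSup {x : ℝ | ∃ (i : Fin M) (k l h : Fin L), k ≠ l ∧
    x = |f i k h.succ - f i l h.succ|}

/-- The variance proxy `σ²`. -/
def sigmaSq {M N L : ℕ} (f : Fin M → Fin L → Fin (L + 1) → ℝ)
    (q : Fin M → Fin N → ℝ) (p : Fin M → Fin L → Fin L → ℝ) : ℝ :=
  (1 / (nbar f) ^ 2) * sSup {x : ℝ | ∃ (j : Fin N) (k l : Fin L), k ≠ l ∧
    x = ∑ i, ∑ h : Fin L, q i j * (f i k h.succ - f i l h.succ) ^ 2 * p i k h}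

/-- The error rate `E_N`. -/
def errRate {Ω : Type*} {N L : ℕ} (y yhat : Fin N → Ω → Fin L) (ω : Ω) : ℝ :=
  (N : ℝ)⁻¹ * ∑ j, if yhat j ω ≠ y j ω then (1 : ℝ) else 0

/-- `φ(x) = exp(−x²/2)`. -/
def phi (x : ℝ) : ℝ := Real.exp (-x ^ 2 / 2)

/-- Kullback–Leibler divergence between Bernoulli distributions. -/
def klBer (x y : ℝ) : ℝ := x * Real.log (x / y) + (1 - x) * Real.log ((1 - x) / (1 - y))

end CrowdDS

open Finset
open scoped Nat

theorem exp_le_one_add_add_sq_div_two_of_nonpos {x : ℝ} (hx : x ≤ 0) :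
    exp x ≤ 1 + x + x ^ 2 / 2 := by
  let g : ℝ → ℝ := fun s => 1 + s + s ^ 2 / 2 - exp s
  have hg : ∀ s, HasDerivAt g (1 + s - exp s) s := fun s => by
    simpa using (((hasDerivAt_id' s).const_add 1).fun_add
      ((hasDerivAt_pow 2 s).div_const 2)).fun_sub (hasDerivAt_exp s)
  have hanti : Antitone g := antitone_of_deriv_nonpos (fun s => (hg s).differentiableAt)
    fun s => by rw [(hg s).deriv]; linarith [add_one_le_exp s]
  have := hanti hx
  norm_num [g] at this
  linarith

theorem exp_le_one_add_add_sq_div_of_nonneg {x : ℝ} (hx0 : 0 ≤ x) (hx3 : x < 3) :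
    exp x ≤ 1 + x + x ^ 2 / (2 * (1 - x / 3)) := by
  have hs := summable_pow_div_factorial x
  have hs2 : Summable fun n : ℕ => x ^ (n + 2) / (n + 2)! := (summable_nat_add_iff 2).2 hs
  -- each tail term is dominated by a geometric one, since `2 * 3 ^ n ≤ (n + 2)!`
  have hterm (n : ℕ) : x ^ (n + 2) / (n + 2)! ≤ x ^ 2 / 2 * (x / 3) ^ n := by
    have h : ((2 ! * 3 ^ n : ℕ) : ℝ) ≤ (2 + n)! := by
      exact_mod_cast Nat.factorial_mul_pow_le_factorial
    rw [add_comm n 2, div_pow, pow_add]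
    push_cast [Nat.factorial] at h
    calc x ^ 2 * x ^ n / (2 + n)! ≤ x ^ 2 * x ^ n / (2 * 3 ^ n) := by gcongr
      _ = _ := by field_simp
  have hgeom : HasSum (fun n : ℕ => x ^ 2 / 2 * (x / 3) ^ n) (x ^ 2 / 2 * (1 - x / 3)⁻¹) :=
    (hasSum_geometric_of_lt_one (by positivity) (by linarith)).mul_left _
  have htail := hs2.tsum_le_tsum hterm hgeom.summable
  rw [hgeom.tsum_eq] at htail
  rw [exp_eq_exp_ℝ, NormedSpace.exp_eq_tsum_div]
  dsimp only
  rw [hs.tsum_eq_zero_add, ((summable_nat_add_iff 1).2 hs).tsum_eq_zero_add]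
  calc _ = 1 + x + ∑' n : ℕ, x ^ (n + 2) / (n + 2)! := by norm_num [Nat.factorial]; ring
    _ ≤ _ := by
      rw [show x ^ 2 / (2 * (1 - x / 3)) = x ^ 2 / 2 * (1 - x / 3)⁻¹ by field_simp]
      linarith

theorem exp_le_one_add_add_sq_div {x u : ℝ} (hxu : x ≤ u) (hu0 : 0 ≤ u) (hu3 : u < 3) :
    exp x ≤ 1 + x + x ^ 2 / (2 * (1 - u / 3)) := by
  rcases le_total x 0 with hx | hx
  · calc exp x ≤ 1 + x + x ^ 2 / 2 := exp_le_one_add_add_sq_div_two_of_nonpos hx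
      _ ≤ _ := by gcongr <;> linarith
  · calc exp x ≤ 1 + x + x ^ 2 / (2 * (1 - x / 3)) :=
          exp_le_one_add_add_sq_div_of_nonneg hx (by linarith)
      _ ≤ _ := by gcongr; linarith

theorem sum_mul_exp_le_of_abs_le {α : Type*} [Fintype α] {w g : α → ℝ} {d : ℝ}
    (hw0 : ∀ a, 0 ≤ w a) (hw1 : ∑ a, w a = 1) (hg : ∀ a, |g a| ≤ d) (t : ℝ) :
    ∑ a, w a * exp (t * g a) ≤ exp (t * ∑ a, w a * g a + d ^ 2 * t ^ 2 / 2) := by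
  let _ : MeasurableSpace α := ⊤
  have : DiscreteMeasurableSpace α := ⟨fun _ => trivial⟩
  let P : PMF α := PMF.ofFintype (fun a => ENNReal.ofReal (w a)) (by
    rw [← ENNReal.ofReal_sum_of_nonneg fun a _ => hw0 a, hw1, ENNReal.ofReal_one])
  have hP (F : α → ℝ) : ∫ a, F a ∂P.toMeasure = ∑ a, w a * F a := by
    simp [P, PMF.integral_eq_sum, ENNReal.toReal_ofReal (hw0 _)]
  have hoeffding := (hasSubgaussianMGF_of_mem_Icc (μ := P.toMeasure) (X := g)
    Measurable.of_discrete.aemeasurable (ae_of_all _ fun a => abs_le.1 (hg a))).mgf_le t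
  rw [mgf, hP, hP] at hoeffding
  have hc : (((‖d - -d‖₊ / 2) ^ 2 : NNReal) : ℝ) = d ^ 2 := by
    simp [← two_mul]
  rw [hc] at hoeffding
  calc ∑ a, w a * exp (t * g a)
      = exp (t * ∑ a, w a * g a) * ∑ a, w a * exp (t * (g a - ∑ a, w a * g a)) := by
        rw [mul_sum]
        refine sum_congr rfl fun a _ => ?_
        rw [mul_left_comm, ← exp_add]
        ring_nf
    _ ≤ exp (t * ∑ a, w a * g a) * exp (d ^ 2 * t ^ 2 / 2) := by gcongr
    _ = _ := (exp_add _ _).symm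

theorem sum_mul_exp_le_of_le {α : Type*} [Fintype α] {w g : α → ℝ} {C t : ℝ}
    (hw0 : ∀ a, 0 ≤ w a) (hw1 : ∑ a, w a = 1) (hg : ∀ a, g a ≤ C) (hC : 0 ≤ C)
    (ht : 0 ≤ t) (htC : t * C < 3) :
    ∑ a, w a * exp (t * g a)
      ≤ exp (t * ∑ a, w a * g a + t ^ 2 * (∑ a, w a * g a ^ 2) / (2 * (1 - t * C / 3))) := by
  set K := 2 * (1 - t * C / 3)
  have hpoint (a : α) : exp (t * g a) ≤ 1 + t * g a + (t * g a) ^ 2 / K :=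
    exp_le_one_add_add_sq_div (mul_le_mul_of_nonneg_left (hg a) ht) (mul_nonneg ht hC) htC
  have hexpand (a : α) : w a * (1 + t * g a + (t * g a) ^ 2 / K)
      = w a + t * (w a * g a) + t ^ 2 / K * (w a * g a ^ 2) := by ring
  calc ∑ a, w a * exp (t * g a) ≤ ∑ a, w a * (1 + t * g a + (t * g a) ^ 2 / K) :=
        sum_le_sum fun a _ => mul_le_mul_of_nonneg_left (hpoint a) (hw0 a)
    _ = 1 + (t * ∑ a, w a * g a + t ^ 2 * (∑ a, w a * g a ^ 2) / K) := by
        simp only [hexpand, sum_add_distrib, ← mul_sum, hw1]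
        ring
    _ ≤ _ := by linarith [add_one_le_exp (t * ∑ a, w a * g a + t ^ 2 * (∑ a, w a * g a ^ 2) / K)]

theorem sum_filter_prod_le_exp_mul_prod_sum {ι α : Type*} [Fintype ι] [DecidableEq ι]
    [Fintype α] {w : ι → α → ℝ} (hw : ∀ i a, 0 ≤ w i a) (g : ι → α → ℝ) (c : ℝ) {t : ℝ}
    (ht : 0 ≤ t) :
    ∑ x ∈ univ.filter (fun x : ι → α => 0 ≤ ∑ i, g i (x i) + c), ∏ i, w i (x i)
      ≤ exp (t * c) * ∏ i, ∑ a, w i a * exp (t * g i a) := by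
  rw [prod_univ_sum, Fintype.piFinset_univ, mul_sum]
  have hterm (x : ι → α) : exp (t * c) * ∏ i, w i (x i) * exp (t * g i (x i))
      = exp (t * (∑ i, g i (x i) + c)) * ∏ i, w i (x i) := by
    rw [prod_mul_distrib, ← exp_sum, mul_left_comm, ← exp_add, ← mul_sum]
    ring_nf
  simp only [hterm]
  calc ∑ x ∈ univ.filter (fun x : ι → α => 0 ≤ ∑ i, g i (x i) + c), ∏ i, w i (x i)
      ≤ ∑ x ∈ univ.filter (fun x : ι → α => 0 ≤ ∑ i, g i (x i) + c),
          exp (t * (∑ i, g i (x i) + c)) * ∏ i, w i (x i) :=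
        sum_le_sum fun x hx => le_mul_of_one_le_left (prod_nonneg fun i _ => hw i (x i))
          (one_le_exp (mul_nonneg ht (mem_filter.1 hx).2))
    _ ≤ _ := sum_le_sum_of_subset_of_nonneg (filter_subset _ _) fun x _ _ =>
        mul_nonneg (exp_pos _).le (prod_nonneg fun i _ => hw i (x i))

theorem exists_bernstein_exponent_le {s V C : ℝ} (hs : 0 ≤ s) (hV : 0 ≤ V) (hC : 0 ≤ C) :
    ∃ t, 0 ≤ t ∧ t * C < 3 ∧
      -(t * s) + t ^ 2 * V / (2 * (1 - t * C / 3)) ≤ -s ^ 2 / (2 * (V + C * s / 3)) := by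
  set D := V + C * s / 3
  have hD : 0 ≤ D := by positivity
  rcases hV.eq_or_lt with hV0 | hVpos
  · -- with no variance term the optimal `t = s / D` sits on the boundary `t * C = 3`
    refine ⟨s / (2 * D), by positivity, ?_, ?_⟩
    · rcases hD.eq_or_lt with hD0 | hDpos
      · simp [← hD0]
      · rw [div_mul_eq_mul_div, div_lt_iff₀ (by positivity)]
        simp only [D, ← hV0, zero_add] at hDpos ⊢
        linarith
    · rw [← hV0, mul_zero, zero_div, add_zero, div_mul_eq_mul_div, ← sq, neg_div]
  · have hDpos : 0 < D := by positivity
    refine ⟨s / D, by positivity, ?_, ?_⟩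
    · rw [div_mul_eq_mul_div, div_lt_iff₀ hDpos]
      simp only [D]
      nlinarith
    · have hK : 1 - s / D * C / 3 = V / D := by field_simp; simp only [D]; ring
      refine le_of_eq ?_
      rw [hK]
      field_simp
      ring

section MixtureOfProducts

variable {Ω κ ι ρ : Type*} [MeasurableSpace Ω] {μ : Measure Ω} [Fintype κ] [Fintype ι]
  [Fintype ρ] {Y : Ω → κ} {X : ι → Ω → ρ} {pri : κ → ℝ} {W : κ → ι → ρ → ℝ}

theorem measureReal_le_sum_mul_exp_mul_prod (hpri0 : ∀ k, 0 ≤ pri k) (hW : ∀ k i x, 0 ≤ W k i x)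
    (hlaw : ∀ k (x : ι → ρ), μ.real {ω | Y ω = k ∧ ∀ i, X i ω = x i} = pri k * ∏ i, W k i (x i))
    (g : κ → ι → ρ → ℝ) (c : κ → ℝ) {t : ℝ} (ht : 0 ≤ t) :
    μ.real {ω | 0 ≤ ∑ i, g (Y ω) i (X i ω) + c (Y ω)}
      ≤ ∑ k, pri k * (exp (t * c k) * ∏ i, ∑ x, W k i x * exp (t * g k i x)) := by
  classical
  let E k := univ.filter (fun x : ι → ρ => 0 ≤ ∑ i, g k i (x i) + c k)
  have hatoms : {ω | 0 ≤ ∑ i, g (Y ω) i (X i ω) + c (Y ω)}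
      = ⋃ k, ⋃ x ∈ E k, {ω | Y ω = k ∧ ∀ i, X i ω = x i} := by
    ext ω
    simp only [E, Set.mem_ofPred_eq, Set.mem_iUnion, mem_filter, mem_univ, true_and,
      exists_prop]
    constructor
    · exact fun hω => ⟨Y ω, fun i => X i ω, hω, rfl, fun _ => rfl⟩
    · rintro ⟨k, x, hx, rfl, hX⟩
      simpa only [← funext hX] using hx
  calc μ.real {ω | 0 ≤ ∑ i, g (Y ω) i (X i ω) + c (Y ω)}
      ≤ ∑ k, ∑ x ∈ E k, μ.real {ω | Y ω = k ∧ ∀ i, X i ω = x i} := by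
        rw [hatoms]
        exact (measureReal_iUnion_fintype_le _).trans
          (sum_le_sum fun k _ => measureReal_biUnion_finset_le _ _)
    _ = ∑ k, pri k * ∑ x ∈ E k, ∏ i, W k i (x i) := by simp only [hlaw, mul_sum]
    _ ≤ _ := sum_le_sum fun k _ => mul_le_mul_of_nonneg_left
        (sum_filter_prod_le_exp_mul_prod_sum (hW k) (g k) (c k) ht) (hpri0 k)

theorem measureReal_le_exp_of_sum_mul_exp_le (hpri0 : ∀ k, 0 ≤ pri k)
    (hpri1 : ∑ k, pri k ≤ 1) (hW : ∀ k i x, 0 ≤ W k i x)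
    (hlaw : ∀ k (x : ι → ρ), μ.real {ω | Y ω = k ∧ ∀ i, X i ω = x i} = pri k * ∏ i, W k i (x i))
    (g : κ → ι → ρ → ℝ) (c : κ → ℝ) {t R : ℝ} (ht : 0 ≤ t) (r : κ → ι → ℝ)
    (hmgf : ∀ k i, ∑ x, W k i x * exp (t * g k i x) ≤ exp (r k i))
    (hR : ∀ k, t * c k + ∑ i, r k i ≤ R) :
    μ.real {ω | 0 ≤ ∑ i, g (Y ω) i (X i ω) + c (Y ω)} ≤ exp R := by
  have hk (k : κ) : exp (t * c k) * ∏ i, ∑ x, W k i x * exp (t * g k i x) ≤ exp R :=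
    calc exp (t * c k) * ∏ i, ∑ x, W k i x * exp (t * g k i x)
        ≤ exp (t * c k) * ∏ i, exp (r k i) := by
          gcongr with i
          · exact fun i _ => sum_nonneg fun x _ => mul_nonneg (hW k i x) (exp_pos _).le
          · exact hmgf k i
      _ ≤ exp R := by rw [← exp_sum, ← exp_add]; exact exp_le_exp.2 (hR k)
  calc _ ≤ ∑ k, pri k * (exp (t * c k) * ∏ i, ∑ x, W k i x * exp (t * g k i x)) :=
        measureReal_le_sum_mul_exp_mul_prod hpri0 hW hlaw g c ht
    _ ≤ ∑ k, pri k * exp R := sum_le_sum fun k _ => mul_le_mul_of_nonneg_left (hk k) (hpri0 k)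
    _ ≤ exp R := by
      rw [← sum_mul]
      exact mul_le_of_le_one_left (exp_pos _).le hpri1

theorem measureReal_le_exp_of_abs_le (hpri0 : ∀ k, 0 ≤ pri k)
    (hpri1 : ∑ k, pri k ≤ 1) (hW0 : ∀ k i x, 0 ≤ W k i x) (hW1 : ∀ k i, ∑ x, W k i x = 1)
    (hlaw : ∀ k (x : ι → ρ), μ.real {ω | Y ω = k ∧ ∀ i, X i ω = x i} = pri k * ∏ i, W k i (x i))
    {g : κ → ι → ρ → ℝ} {c : κ → ℝ} {d : ι → ℝ} {s : ℝ} (hg : ∀ k i x, |g k i x| ≤ d i)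
    (hs : 0 ≤ s) (hmean : ∀ k, ∑ i, ∑ x, W k i x * g k i x + c k ≤ -s) :
    μ.real {ω | 0 ≤ ∑ i, g (Y ω) i (X i ω) + c (Y ω)} ≤ exp (-s ^ 2 / (2 * ∑ i, d i ^ 2)) := by
  set S := ∑ i, d i ^ 2
  refine measureReal_le_exp_of_sum_mul_exp_le hpri0 hpri1 hW0 hlaw g c (t := s / S)
    (by positivity) _ (fun k i => sum_mul_exp_le_of_abs_le (hW0 k i) (hW1 k i) (hg k i) _)
    fun k => ?_
  rw [sum_add_distrib, ← mul_sum, ← sum_div, ← sum_mul]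
  have hlin := mul_le_mul_of_nonneg_left (hmean k) (show 0 ≤ s / S by positivity)
  rcases (show 0 ≤ S by positivity).eq_or_lt with hS0 | hSpos
  · simp [← hS0]
  · have hopt : s / S * (-s) + S * (s / S) ^ 2 / 2 = -s ^ 2 / (2 * S) := by field_simp; ring
    linarith

theorem measureReal_le_exp_of_le (hpri0 : ∀ k, 0 ≤ pri k)
    (hpri1 : ∑ k, pri k ≤ 1) (hW0 : ∀ k i x, 0 ≤ W k i x) (hW1 : ∀ k i, ∑ x, W k i x = 1)
    (hlaw : ∀ k (x : ι → ρ), μ.real {ω | Y ω = k ∧ ∀ i, X i ω = x i} = pri k * ∏ i, W k i (x i))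
    {g : κ → ι → ρ → ℝ} {c : κ → ℝ} {C V s : ℝ} (hg : ∀ k i x, g k i x ≤ C) (hC : 0 ≤ C)
    (hvar : ∀ k, ∑ i, ∑ x, W k i x * g k i x ^ 2 ≤ V) (hV : 0 ≤ V)
    (hs : 0 ≤ s) (hmean : ∀ k, ∑ i, ∑ x, W k i x * g k i x + c k ≤ -s) :
    μ.real {ω | 0 ≤ ∑ i, g (Y ω) i (X i ω) + c (Y ω)}
      ≤ exp (-s ^ 2 / (2 * (V + C * s / 3))) := by
  obtain ⟨t, ht, htC, hexp⟩ := exists_bernstein_exponent_le hs hV hC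
  refine measureReal_le_exp_of_sum_mul_exp_le hpri0 hpri1 hW0 hlaw g c ht _
    (fun k i => sum_mul_exp_le_of_le (hW0 k i) (hW1 k i) (hg k i) hC ht htC) fun k => ?_
  rw [sum_add_distrib, ← mul_sum, ← sum_div, ← mul_sum]
  have hlin := mul_le_mul_of_nonneg_left (hmean k) ht
  have hvar' : t ^ 2 * (∑ i, ∑ x, W k i x * g k i x ^ 2) / (2 * (1 - t * C / 3))
      ≤ t ^ 2 * V / (2 * (1 - t * C / 3)) :=
    div_le_div_of_nonneg_right (mul_le_mul_of_nonneg_left (hvar k) (sq_nonneg t)) (by linarith)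
  linarith

end MixtureOfProducts

theorem setOf_eq_subset_margin_nonneg {Ω κ ι ρ : Type*} [Fintype ι] {Y yhat : Ω → κ}
    {X : ι → Ω → ρ} (s : κ → ι → ρ → ℝ) (a : κ → ℝ)
    (hyhat : ∀ ω k, ∑ i, s k i (X i ω) + a k ≤ ∑ i, s (yhat ω) i (X i ω) + a (yhat ω))
    (alt : κ → κ) {D : ℝ} (hD : 0 ≤ D) :
    {ω | yhat ω = Y ω} ⊆ {ω | 0 ≤ ∑ i, (s (Y ω) i (X i ω) - s (alt (Y ω)) i (X i ω)) / D
      + (a (Y ω) - a (alt (Y ω))) / D} := by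
  intro ω (hω : yhat ω = Y ω)
  have h := hyhat ω (alt (Y ω))
  rw [hω] at h
  show 0 ≤ ∑ i, (s (Y ω) i (X i ω) - s (alt (Y ω)) i (X i ω)) / D + (a (Y ω) - a (alt (Y ω))) / D
  rw [← sum_div, ← add_div, sum_sub_distrib]
  exact div_nonneg (by linarith) hD

theorem sum_measureReal_setOf_eq {Ω κ : Type*} [MeasurableSpace Ω] {μ : Measure Ω}
    [IsProbabilityMeasure μ] [Fintype κ] [MeasurableSpace κ] [MeasurableSingletonClass κ]
    {Y : Ω → κ} (hY : Measurable Y) : ∑ k, μ.real {ω | Y ω = k} = 1 := by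
  rw [← probReal_univ (μ := μ), ← Set.preimage_univ (f := Y), ← coe_univ,
    ← sum_measureReal_preimage_singleton _ fun k _ => hY (measurableSet_singleton k)]
  rfl

theorem one_sub_probReal_le_probReal_compl {Ω : Type*} [MeasurableSpace Ω] {μ : Measure Ω}
    [IsProbabilityMeasure μ] (s : Set Ω) : 1 - μ.real s ≤ μ.real sᶜ := by
  have := measureReal_union_le (μ := μ) s sᶜ
  rw [Set.union_compl_self, probReal_univ] at this
  linarith

namespace CrowdDS

variable {M N L : ℕ}

def scoreRange (f : Fin M → Fin L → Fin (L + 1) → ℝ) (i : Fin M) : ℝ :=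
  sSup {x : ℝ | ∃ k l h : Fin L, k ≠ l ∧ x = |f i k h.succ - f i l h.succ|}

theorem sq_nbar (f : Fin M → Fin L → Fin (L + 1) → ℝ) :
    nbar f ^ 2 = ∑ i, scoreRange f i ^ 2 :=
  Real.sq_sqrt (sum_nonneg fun _ _ => sq_nonneg _)

theorem nbar_nonneg (f : Fin M → Fin L → Fin (L + 1) → ℝ) : 0 ≤ nbar f := Real.sqrt_nonneg _

theorem sum_scoreRange_div_nbar_sq {f : Fin M → Fin L → Fin (L + 1) → ℝ} (hN : nbar f ≠ 0) :
    ∑ i, (scoreRange f i / nbar f) ^ 2 = 1 := by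
  simp only [div_pow, ← sum_div, ← sq_nbar]
  exact div_self (pow_ne_zero 2 hN)

theorem nbar_pos_of_tauMax_neg {f : Fin M → Fin L → Fin (L + 1) → ℝ} {a : Fin L → ℝ}
    {q : Fin M → Fin N → ℝ} {p : Fin M → Fin L → Fin L → ℝ} {j : Fin N}
    (hτ : tauMax f a q p j < 0) : 0 < nbar f := by
  refine (nbar_nonneg f).lt_of_ne' fun hN => hτ.not_ge (Real.sSup_nonneg ?_)
  rintro _ ⟨k, l, -, rfl⟩
  show 0 ≤ gap f a q p j k l / nbar f
  rw [hN, div_zero]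

theorem nontrivial_of_tauMax_neg {f : Fin M → Fin L → Fin (L + 1) → ℝ} {a : Fin L → ℝ}
    {q : Fin M → Fin N → ℝ} {p : Fin M → Fin L → Fin L → ℝ} {j : Fin N}
    (hτ : tauMax f a q p j < 0) : Nontrivial (Fin L) := by
  by_contra h
  refine hτ.not_ge (Real.sSup_nonneg ?_)
  rintro _ ⟨k, l, hkl, -⟩
  exact (h (nontrivial_of_ne k l hkl)).elim

theorem condLaw_nonneg {q : Fin M → Fin N → ℝ} {p : Fin M → Fin L → Fin L → ℝ} {i : Fin M}
    {j : Fin N} {k : Fin L} (hq0 : 0 ≤ q i j) (hq1 : q i j ≤ 1) (hp0 : ∀ h, 0 ≤ p i k h)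
    (h' : Fin (L + 1)) : 0 ≤ condLaw q p i j k h' := by
  unfold condLaw
  split_ifs
  · linarith
  · exact mul_nonneg hq0 (hp0 _)

theorem sum_condLaw_mul (q : Fin M → Fin N → ℝ) (p : Fin M → Fin L → Fin L → ℝ) (i : Fin M)
    (j : Fin N) (k : Fin L) (F : Fin (L + 1) → ℝ) :
    ∑ h', condLaw q p i j k h' * F h' = (1 - q i j) * F 0 + ∑ h, q i j * F h.succ * p i k h := by
  simp only [Fin.sum_univ_succ, condLaw, Fin.succ_ne_zero, dite_true, dite_false, Fin.pred_succ]
  congr 1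
  exact sum_congr rfl fun h _ => by ring

theorem sum_condLaw {q : Fin M → Fin N → ℝ} {p : Fin M → Fin L → Fin L → ℝ} {i : Fin M}
    {k : Fin L} (hp1 : ∑ h, p i k h = 1) (j : Fin N) : ∑ h', condLaw q p i j k h' = 1 := by
  simpa [← mul_sum, hp1] using sum_condLaw_mul q p i j k 1

section ScoreDifferences

variable {f : Fin M → Fin L → Fin (L + 1) → ℝ} {i : Fin M} {k l : Fin L}

theorem abs_sub_div_nbar_le (hf0 : f i k 0 = f i l 0) (hkl : k ≠ l) (h' : Fin (L + 1)) :
    |(f i k h' - f i l h') / nbar f| ≤ scoreRange f i / nbar f := by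
  rw [abs_div, abs_of_nonneg (nbar_nonneg f)]
  refine div_le_div_of_nonneg_right ?_ (nbar_nonneg f)
  cases h' using Fin.cases with
  | zero =>
    rw [hf0, sub_self, abs_zero]
    exact Real.sSup_nonneg (by rintro _ ⟨_, _, _, _, rfl⟩; exact abs_nonneg _)
  | succ h =>
    refine le_csSup ((Set.finite_range fun t : Fin L × Fin L × Fin L =>
      |f i t.1 t.2.2.succ - f i t.2.1 t.2.2.succ|).bddAbove.mono ?_) ⟨k, l, h, hkl, rfl⟩
    rintro _ ⟨k, l, h, -, rfl⟩
    exact ⟨(k, l, h), rfl⟩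

theorem abs_sub_div_nbar_le_cConst (hf0 : f i k 0 = f i l 0) (hkl : k ≠ l)
    (h' : Fin (L + 1)) : |(f i k h' - f i l h') / nbar f| ≤ cConst f := by
  rw [cConst, one_div_mul_eq_div, abs_div, abs_of_nonneg (nbar_nonneg f)]
  refine div_le_div_of_nonneg_right ?_ (nbar_nonneg f)
  cases h' using Fin.cases with
  | zero =>
    rw [hf0, sub_self, abs_zero]
    exact Real.sSup_nonneg (by rintro _ ⟨_, _, _, _, _, rfl⟩; exact abs_nonneg _)
  | succ h =>
    refine le_csSup ((Set.finite_range fun t : Fin M × Fin L × Fin L × Fin L =>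
      |f t.1 t.2.1 t.2.2.2.succ - f t.1 t.2.2.1 t.2.2.2.succ|).bddAbove.mono ?_)
      ⟨i, k, l, h, hkl, rfl⟩
    rintro _ ⟨i, k, l, h, -, rfl⟩
    exact ⟨(i, k, l, h), rfl⟩

theorem cConst_nonneg (f : Fin M → Fin L → Fin (L + 1) → ℝ) : 0 ≤ cConst f :=
  mul_nonneg (one_div_nonneg.2 (nbar_nonneg f))
    (Real.sSup_nonneg (by rintro _ ⟨_, _, _, _, _, rfl⟩; exact abs_nonneg _))

variable {q : Fin M → Fin N → ℝ} {p : Fin M → Fin L → Fin L → ℝ} {j : Fin N}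

theorem sum_sum_condLaw_mul_add_le_tauMax (a : Fin L → ℝ) (hf0 : ∀ i, f i k 0 = f i l 0)
    (hkl : k ≠ l) :
    ∑ i, ∑ h', condLaw q p i j k h' * ((f i k h' - f i l h') / nbar f) + (a k - a l) / nbar f
      ≤ tauMax f a q p j := by
  have hgap : ∑ i, ∑ h', condLaw q p i j k h' * ((f i k h' - f i l h') / nbar f)
      + (a k - a l) / nbar f = gap f a q p j k l / nbar f := by
    simp only [sum_condLaw_mul, hf0, sub_self, zero_div, mul_zero, zero_add, gap, add_div,
      sum_div]
    congr! 3 with i _ h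
    ring
  rw [hgap]
  refine le_csSup ((Set.finite_range fun t : Fin L × Fin L =>
    gap f a q p j t.1 t.2 / nbar f).bddAbove.mono ?_) ⟨k, l, hkl, rfl⟩
  rintro _ ⟨k, l, -, rfl⟩
  exact ⟨(k, l), rfl⟩

theorem sum_sum_condLaw_mul_sq_le_sigmaSq (hf0 : ∀ i, f i k 0 = f i l 0) (hkl : k ≠ l) :
    ∑ i, ∑ h', condLaw q p i j k h' * ((f i k h' - f i l h') / nbar f) ^ 2 ≤ sigmaSq f q p := by
  have hmoment : ∑ i, ∑ h', condLaw q p i j k h' * ((f i k h' - f i l h') / nbar f) ^ 2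
      = 1 / nbar f ^ 2 * ∑ i, ∑ h, q i j * (f i k h.succ - f i l h.succ) ^ 2 * p i k h := by
    simp only [sum_condLaw_mul, hf0, sub_self, zero_div, ne_eq, OfNat.ofNat_ne_zero,
      not_false_eq_true, zero_pow, mul_zero, zero_add, mul_sum]
    congr! 2 with i _ h
    ring
  rw [hmoment, sigmaSq]
  gcongr
  refine le_csSup ((Set.finite_range fun t : Fin N × Fin L × Fin L =>
    ∑ i, ∑ h, q i t.1 * (f i t.2.1 h.succ - f i t.2.2 h.succ) ^ 2 * p i t.2.1 h).bddAbove.mono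
    ?_) ⟨j, k, l, hkl, rfl⟩
  rintro _ ⟨j, k, l, -, rfl⟩
  exact ⟨(j, k, l), rfl⟩

theorem sigmaSq_nonneg (hq0 : ∀ i j, 0 ≤ q i j) (hp0 : ∀ i k h, 0 ≤ p i k h) :
    0 ≤ sigmaSq f q p := by
  refine mul_nonneg (by positivity) (Real.sSup_nonneg ?_)
  rintro _ ⟨j, k, l, -, rfl⟩
  exact sum_nonneg fun i _ => sum_nonneg fun h _ =>
    mul_nonneg (mul_nonneg (hq0 i j) (sq_nonneg _)) (hp0 i k h)

end ScoreDifferences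

end CrowdDS

open CrowdDS

theorem item_error_prob_lower_bound_general
    {Ω : Type*} [MeasurableSpace Ω] (μ : Measure Ω) [IsProbabilityMeasure μ]
    {M N L : ℕ}
    (y : Fin N → Ω → Fin L) (Z : Fin M → Fin N → Ω → Fin (L + 1))
    (hym : ∀ j, Measurable (y j))
    (pri : Fin L → ℝ) (q : Fin M → Fin N → ℝ) (p : Fin M → Fin L → Fin L → ℝ)
    (hpri : ∀ k, 0 ≤ pri k) (hq0 : ∀ i j, 0 ≤ q i j) (hq1 : ∀ i j, q i j ≤ 1)
    (hp0 : ∀ i k h, 0 ≤ p i k h) (hp1 : ∀ i k, ∑ h, p i k h = 1)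
    (hprior : ∀ (j : Fin N) (k : Fin L), (μ {ω | y j ω = k}).toReal = pri k)
    (hlaw : ∀ (j : Fin N) (k : Fin L) (h : Fin M → Fin (L + 1)),
      (μ {ω | y j ω = k ∧ ∀ i, Z i j ω = h i}).toReal
        = pri k * ∏ i, CrowdDS.condLaw q p i j k (h i))
    (f : Fin M → Fin L → Fin (L + 1) → ℝ) (hf0 : ∀ i k k', f i k 0 = f i k' 0)
    (a : Fin L → ℝ)
    (yhat : Fin N → Ω → Fin L)
    (hyhat : ∀ (j : Fin N) (ω : Ω) (k : Fin L),
      (∑ i, f i k (Z i j ω)) + a k ≤ (∑ i, f i (yhat j ω) (Z i j ω)) + a (yhat j ω))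
    (j : Fin N) (ht : CrowdDS.tauMax f a q p j ≤ 0) :
    1 - min
        (Real.exp (-(CrowdDS.tauMax f a q p j) ^ 2 / 2))
        (Real.exp (-(CrowdDS.tauMax f a q p j) ^ 2 /
          (2 * (CrowdDS.sigmaSq f q p
            - CrowdDS.cConst f * CrowdDS.tauMax f a q p j / 3))))
      ≤ (μ {ω | yhat j ω ≠ y j ω}).toReal := by
  set τ := tauMax f a q p j
  rcases ht.eq_or_lt with hτ0 | hτ
  · simp [hτ0]
  have hN := nbar_pos_of_tauMax_neg hτ
  have := nontrivial_of_tauMax_neg hτ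
  choose alt halt using fun k : Fin L => exists_ne k
  have hpri1 : ∑ k, pri k ≤ 1 := by
    simp only [← hprior j]
    exact (sum_measureReal_setOf_eq (hym j)).le
  have hW0 (k i h') := condLaw_nonneg (hq0 i j) (hq1 i j) (hp0 i k) h'
  have hW1 (k i) := sum_condLaw (q := q) (hp1 i k) j
  have hf0' (k) (i) := hf0 i k (alt k)
  have hmean (k) := (sum_sum_condLaw_mul_add_le_tauMax (j := j) (q := q) (p := p) a (hf0' k)
    (halt k).symm).trans_eq (neg_neg τ).symm
  have hcorrect := measureReal_mono (μ := μ)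
    (setOf_eq_subset_margin_nonneg (Y := y j) (fun k i => f i k) a (hyhat j) alt hN.le)
  have hA := measureReal_le_exp_of_abs_le hpri hpri1 hW0 hW1 (hlaw j)
    (fun k i h' => abs_sub_div_nbar_le (hf0' k i) (halt k).symm h') (neg_nonneg.2 ht)
    hmean
  have hB := measureReal_le_exp_of_le hpri hpri1 hW0 hW1 (hlaw j)
    (fun k i h' => (le_abs_self _).trans (abs_sub_div_nbar_le_cConst (hf0' k i) (halt k).symm h'))
    (cConst_nonneg f) (fun k => sum_sum_condLaw_mul_sq_le_sigmaSq (hf0' k) (halt k).symm)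
    (sigmaSq_nonneg hq0 hp0) (neg_nonneg.2 ht) hmean
  rw [sum_scoreRange_div_nbar_sq hN.ne', neg_sq, mul_one] at hA
  rw [neg_sq, show sigmaSq f q p + cConst f * -τ / 3 = sigmaSq f q p - cConst f * τ / 3 by ring]
    at hB
  change _ ≤ μ.real {ω | yhat j ω = y j ω}ᶜ
  exact (sub_le_sub_left (le_min (hcorrect.trans hA) (hcorrect.trans hB)) 1).trans
    (one_sub_probReal_le_probReal_compl _)

/-- Under the general Dawid–Skene model with a decomposable aggregation
rule: for every item `j`, if `τ_j^max ≤ 0`, then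
`P(ŷ_j ≠ y_j) ≥ 1 − min{exp(−(τ_j^max)²/2), exp(−(τ_j^max)²/(2(σ² − c·τ_j^max/3)))}`. -/
theorem item_error_prob_lower_bound
    {Ω : Type*} [MeasurableSpace Ω] (μ : Measure Ω) [IsProbabilityMeasure μ]
    {M N L : ℕ} (hM : 0 < M) (hN : 0 < N) (hL : 2 ≤ L)
    (y : Fin N → Ω → Fin L) (Z : Fin M → Fin N → Ω → Fin (L + 1))
    (hym : ∀ j, Measurable (y j)) (hZm : ∀ i j, Measurable (Z i j))
    (pri : Fin L → ℝ) (q : Fin M → Fin N → ℝ) (p : Fin M → Fin L → Fin L → ℝ)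
    (hpri : ∀ k, 0 ≤ pri k) (hq0 : ∀ i j, 0 ≤ q i j) (hq1 : ∀ i j, q i j ≤ 1)
    (hp0 : ∀ i k h, 0 ≤ p i k h) (hp1 : ∀ i k, ∑ h, p i k h = 1)
    (hprior : ∀ (j : Fin N) (k : Fin L), (μ {ω | y j ω = k}).toReal = pri k)
    (hlaw : ∀ (j : Fin N) (k : Fin L) (h : Fin M → Fin (L + 1)),
      (μ {ω | y j ω = k ∧ ∀ i, Z i j ω = h i}).toReal
        = pri k * ∏ i, CrowdDS.condLaw q p i j k (h i))
    (hindep : iIndepFun (fun j ω => (y j ω, fun i => Z i j ω)) μ)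
    (f : Fin M → Fin L → Fin (L + 1) → ℝ) (hf0 : ∀ i k k', f i k 0 = f i k' 0)
    (a : Fin L → ℝ)
    (yhat : Fin N → Ω → Fin L) (hyhatm : ∀ j, Measurable (yhat j))
    (hyhat : ∀ (j : Fin N) (ω : Ω) (k : Fin L),
      (∑ i, f i k (Z i j ω)) + a k ≤ (∑ i, f i (yhat j ω) (Z i j ω)) + a (yhat j ω))
    (j : Fin N) (ht : CrowdDS.tauMax f a q p j ≤ 0) :
    1 - min
        (Real.exp (-(CrowdDS.tauMax f a q p j) ^ 2 / 2))
        (Real.exp (-(CrowdDS.tauMax f a q p j) ^ 2 /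
          (2 * (CrowdDS.sigmaSq f q p
            - CrowdDS.cConst f * CrowdDS.tauMax f a q p j / 3))))
      ≤ (μ {ω | yhat j ω ≠ y j ω}).toReal :=
  item_error_prob_lower_bound_general μ y Z hym pri q p hpri hq0 hq1 hp0 hp1 hprior hlaw f hf0 a
    yhat hyhat j ht
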